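/- For all u, v ∈ (0,1), the limit of C(u,v;ρ) as ρ → −1⁺ equals the lower Fréchet bound: lim_{ρ→−1⁺} Φ₂(Φ⁻¹(u),Φ⁻¹(v);ρ) = max(u + v − 1, 0). -/
import Mathlib


open MeasureTheory Real Set

/-- Standard normal density φ. -/
noncomputable def stdPdf (x : ℝ) : ℝ :=
  (1 / Real.sqrt (2 * Real.pi)) * Real.exp (-x ^ 2 / 2)

/-- Standard normal distribution function Φ. -/
noncomputable def stdCdf (h : ℝ) : ℝ := ∫ x in Set.Iio h, stdPdf x

/-- Inverse Φ⁻¹ of the standard normal distribution function (on (0,1)). -/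
noncomputable def stdQuantile : ℝ → ℝ := Function.invFun stdCdf

/-- Bivariate standard normal density φ₂ with correlation ρ. -/
noncomputable def binPdf (x y ρ : ℝ) : ℝ :=
  (1 / (2 * Real.pi * Real.sqrt (1 - ρ ^ 2))) *
    Real.exp (-(x ^ 2 - 2 * ρ * x * y + y ^ 2) / (2 * (1 - ρ ^ 2)))

/-- Bivariate standard normal distribution function Φ₂. -/
noncomputable def binCdf (h k ρ : ℝ) : ℝ :=
  ∫ x in Set.Iio h, ∫ y in Set.Iio k, binPdf x y ρ

/-- The bivariate normal copula C(u,v;ρ) = Φ₂(Φ⁻¹(u),Φ⁻¹(v);ρ). -/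
noncomputable def normCopula (u v ρ : ℝ) : ℝ :=
  binCdf (stdQuantile u) (stdQuantile v) ρ

/-- g(u;ρ) = Φ(√((1−ρ)/(1+ρ))·Φ⁻¹(u)). -/
noncomputable def gFun (u ρ : ℝ) : ℝ :=
  stdCdf (Real.sqrt ((1 - ρ) / (1 + ρ)) * stdQuantile u)

section Aux
open Filter



lemma stdPdf_eq : stdPdf = ProbabilityTheory.gaussianPDFReal 0 1 := by
  ext x
  simp [stdPdf, ProbabilityTheory.gaussianPDFReal, one_div]

lemma stdPdf_pos (x : ℝ) : 0 < stdPdf x := by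
  rw [stdPdf_eq]; exact ProbabilityTheory.gaussianPDFReal_pos 0 1 x one_ne_zero

lemma integrable_stdPdf : Integrable stdPdf := by
  rw [stdPdf_eq]; exact ProbabilityTheory.integrable_gaussianPDFReal 0 1

lemma integral_stdPdf : ∫ x, stdPdf x = 1 := by
  rw [stdPdf_eq]; exact ProbabilityTheory.integral_gaussianPDFReal_eq_one 0 one_ne_zero

lemma continuous_stdPdf : Continuous stdPdf := by
  unfold stdPdf; fun_prop

lemma stdCdf_eq_Iic (h : ℝ) : stdCdf h = ∫ x in Set.Iic h, stdPdf x :=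
  (MeasureTheory.integral_Iic_eq_integral_Iio).symm

lemma stdCdf_sub (a b : ℝ) : stdCdf b - stdCdf a = ∫ x in a..b, stdPdf x := by
  rw [stdCdf_eq_Iic, stdCdf_eq_Iic]
  exact intervalIntegral.integral_Iic_sub_Iic integrable_stdPdf.integrableOn
    integrable_stdPdf.integrableOn

lemma continuous_stdCdf : Continuous stdCdf := by
  have : ∀ h, stdCdf h = stdCdf 0 + ∫ x in (0:ℝ)..h, stdPdf x := by
    intro h; rw [← stdCdf_sub]; ring
  rw [funext this]
  exact continuous_const.add (intervalIntegral.continuous_primitive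
    (fun a b => integrable_stdPdf.intervalIntegrable) 0)

lemma monotone_stdCdf : Monotone stdCdf := by
  intro a b hab
  have : 0 ≤ stdCdf b - stdCdf a := by
    rw [stdCdf_sub]
    apply intervalIntegral.integral_nonneg hab
    exact fun x _ => (stdPdf_pos x).le
  linarith

lemma tendsto_stdCdf_atTop : Tendsto stdCdf atTop (nhds 1) := by
  rw [← integral_stdPdf]
  have hc : AECover (volume : Measure ℝ) atTop (fun h : ℝ => Iio h) :=
    MeasureTheory.aecover_Iio tendsto_id
  exact hc.integral_tendsto_of_countably_generated integrable_stdPdf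

lemma tendsto_stdCdf_atBot : Tendsto stdCdf atBot (nhds 0) := by
  have hIci : Tendsto (fun h : ℝ => ∫ x in Set.Ici h, stdPdf x) atBot (nhds 1) := by
    rw [← integral_stdPdf]
    have hc : AECover (volume : Measure ℝ) atBot (fun h : ℝ => Ici h) :=
      MeasureTheory.aecover_Ici tendsto_id
    exact hc.integral_tendsto_of_countably_generated integrable_stdPdf
  have key : ∀ h : ℝ, stdCdf h = 1 - ∫ x in Set.Ici h, stdPdf x := by
    intro h
    have h3 := MeasureTheory.integral_add_compl (measurableSet_Iio (a := h)) integrable_stdPdf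
    rw [compl_Iio, integral_stdPdf] at h3
    show (∫ x in Set.Iio h, stdPdf x) = _
    linarith
  rw [funext key]
  simpa using (tendsto_const_nhds (x := (1:ℝ)) (f := atBot)).sub hIci

lemma stdCdf_mem_Ioo (h : ℝ) : stdCdf h ∈ Set.Ioo (0:ℝ) 1 := by
  constructor
  · have : (0:ℝ) < ∫ x in Set.Iio h, stdPdf x := by
      apply MeasureTheory.setIntegral_pos_iff_support_of_nonneg_ae ?_ ?_ |>.mpr
      · simp only [Function.support, stdPdf_pos, ne_eq]
        have : {x | stdPdf x ≠ 0} = univ := by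
          ext x; simp [(stdPdf_pos x).ne']
        rw [this]
        simp [Real.volume_Iio]
      · exact ae_of_all _ fun x => (stdPdf_pos x).le
      · exact integrable_stdPdf.integrableOn
    exact this
  · have h2 : stdCdf h < stdCdf h + ∫ x in Set.Ici h, stdPdf x := by
      have : (0:ℝ) < ∫ x in Set.Ici h, stdPdf x := by
        apply MeasureTheory.setIntegral_pos_iff_support_of_nonneg_ae ?_ ?_ |>.mpr
        · have : {x | stdPdf x ≠ 0} = univ := by
            ext x; simp [(stdPdf_pos x).ne']
          simp only [Function.support, ne_eq, this]
          simp [Real.volume_Ici]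
        · exact ae_of_all _ fun x => (stdPdf_pos x).le
        · exact integrable_stdPdf.integrableOn
      linarith
    have h3 : stdCdf h + ∫ x in Set.Ici h, stdPdf x = 1 := by
      have h3 := MeasureTheory.integral_add_compl (measurableSet_Iio (a := h)) integrable_stdPdf
      rw [compl_Iio, integral_stdPdf] at h3
      exact h3
    linarith [h2, h3.le]


lemma stdCdf_surj {u : ℝ} (hu : u ∈ Set.Ioo (0:ℝ) 1) : ∃ h, stdCdf h = u := by
  obtain ⟨a, ha⟩ := (tendsto_stdCdf_atBot.eventually_lt_const hu.1).exists
  obtain ⟨b, hb⟩ := (tendsto_stdCdf_atTop.eventually_const_lt hu.2).exists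
  have := intermediate_value_univ a b continuous_stdCdf (Set.mem_Icc.mpr ⟨ha.le, hb.le⟩)
  exact this

lemma stdCdf_stdQuantile {u : ℝ} (hu : u ∈ Set.Ioo (0:ℝ) 1) :
    stdCdf (stdQuantile u) = u :=
  Function.invFun_eq (stdCdf_surj hu)

lemma stdPdf_neg (x : ℝ) : stdPdf (-x) = stdPdf x := by simp [stdPdf]

lemma stdCdf_neg (x : ℝ) : stdCdf (-x) = 1 - stdCdf x := by
  have h1 : stdCdf (-x) = ∫ y in Set.Iic (-x), stdPdf y := stdCdf_eq_Iic _
  have h2 : (∫ y in Set.Iic (-x), stdPdf y) = ∫ y in Set.Iic (-x), stdPdf (-y) := by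
    simp [stdPdf_neg]
  have h3 : (∫ y in Set.Iic (-x), stdPdf (-y)) = ∫ y in Set.Ioi x, stdPdf y := by
    rw [integral_comp_neg_Iic]; norm_num
  have h4 := MeasureTheory.integral_add_compl (measurableSet_Iio (a := x)) integrable_stdPdf
  rw [compl_Iio, integral_stdPdf] at h4
  have h5 : (∫ y in Set.Ici x, stdPdf y) = ∫ y in Set.Ioi x, stdPdf y :=
    MeasureTheory.integral_Ici_eq_integral_Ioi
  show (∫ y in Set.Iio (-x), stdPdf y) = _
  rw [← stdCdf]
  rw [h1, h2, h3, ← h5]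
  show _ = 1 - ∫ y in Set.Iio x, stdPdf y
  linarith

lemma integral_Iio_comp_affine (f : ℝ → ℝ) {s : ℝ} (hs : 0 < s) (c k : ℝ) :
    (∫ y in Set.Iio k, f ((y - c) / s)) = s * ∫ t in Set.Iio ((k - c) / s), f t := by
  have hpre : (fun y : ℝ => (y - c) / s) ⁻¹' Set.Iio ((k - c) / s) = Set.Iio k := by
    ext y
    simp only [Set.mem_preimage, Set.mem_Iio]
    rw [div_lt_div_iff_of_pos_right hs]
    constructor <;> intro h <;> linarith
  have key : ∀ y : ℝ, (Set.Iio k).indicator (fun y => f ((y - c) / s)) y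
      = (Set.Iio ((k - c) / s)).indicator f ((y - c) / s) := by
    intro y
    rw [← Set.indicator_comp_right (fun y : ℝ => (y - c) / s) (g := f), hpre]; rfl
  rw [← MeasureTheory.integral_indicator measurableSet_Iio]
  rw [funext key]
  have h1 : (∫ y : ℝ, (Set.Iio ((k - c) / s)).indicator f ((y - c) / s))
      = ∫ y : ℝ, (Set.Iio ((k - c) / s)).indicator f (y / s) := by
    have h2 := MeasureTheory.integral_add_right_eq_self (μ := volume)
      (fun y : ℝ => (Set.Iio ((k - c) / s)).indicator f ((y - c) / s)) c
    simp only [add_sub_cancel_right] at h2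
    exact h2.symm
  rw [h1, MeasureTheory.Measure.integral_comp_div, abs_of_pos hs,
    MeasureTheory.integral_indicator measurableSet_Iio]
  simp



lemma binPdf_factor (x y ρ : ℝ) (hρ : ρ ^ 2 < 1) :
    binPdf x y ρ = stdPdf x *
      ((1 / Real.sqrt (1 - ρ ^ 2)) * stdPdf ((y - ρ * x) / Real.sqrt (1 - ρ ^ 2))) := by
  have h1 : (0:ℝ) < 1 - ρ ^ 2 := by linarith
  have hs : Real.sqrt (1 - ρ ^ 2) ^ 2 = 1 - ρ ^ 2 := Real.sq_sqrt h1.le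
  have hs0 : 0 < Real.sqrt (1 - ρ ^ 2) := Real.sqrt_pos.mpr h1
  have h2pi : Real.sqrt (2 * Real.pi) ^ 2 = 2 * Real.pi := by
    rw [Real.sq_sqrt]; positivity
  have h2pi0 : 0 < Real.sqrt (2 * Real.pi) := Real.sqrt_pos.mpr (by positivity)
  set s := Real.sqrt (1 - ρ ^ 2) with hsdef
  have hrhs : stdPdf x * ((1 / s) * stdPdf ((y - ρ * x) / s))
      = (1 / Real.sqrt (2 * Real.pi) * (1 / Real.sqrt (2 * Real.pi)) * (1 / s)) *
        (Real.exp (-x ^ 2 / 2) * Real.exp (-((y - ρ * x) / s) ^ 2 / 2)) := by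
    unfold stdPdf; ring
  rw [hrhs, ← Real.exp_add]
  unfold binPdf
  congr 1
  · have hm : Real.sqrt (2 * Real.pi) * Real.sqrt (2 * Real.pi) = 2 * Real.pi :=
      Real.mul_self_sqrt (by positivity)
    rw [div_mul_div_comm, div_mul_div_comm, one_mul, one_mul]
    congr 1
    nlinarith [hm]
  · rw [div_pow, hs]
    field_simp
    ring

lemma inner_integral (x k ρ : ℝ) (hρ : ρ ^ 2 < 1) :
    (∫ y in Set.Iio k, binPdf x y ρ)
      = stdPdf x * stdCdf ((k - ρ * x) / Real.sqrt (1 - ρ ^ 2)) := by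
  have h1 : (0:ℝ) < 1 - ρ ^ 2 := by linarith
  have hs0 : 0 < Real.sqrt (1 - ρ ^ 2) := Real.sqrt_pos.mpr h1
  calc (∫ y in Set.Iio k, binPdf x y ρ)
      = ∫ y in Set.Iio k, stdPdf x *
        ((1 / Real.sqrt (1 - ρ ^ 2)) * stdPdf ((y - ρ * x) / Real.sqrt (1 - ρ ^ 2))) := by
        apply MeasureTheory.setIntegral_congr_fun measurableSet_Iio
        intro y _; exact binPdf_factor x y ρ hρ
    _ = stdPdf x * ((1 / Real.sqrt (1 - ρ ^ 2)) *
        ∫ y in Set.Iio k, stdPdf ((y - ρ * x) / Real.sqrt (1 - ρ ^ 2))) := by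
        rw [MeasureTheory.integral_const_mul, MeasureTheory.integral_const_mul]
    _ = stdPdf x * ((1 / Real.sqrt (1 - ρ ^ 2)) * (Real.sqrt (1 - ρ ^ 2) *
        ∫ t in Set.Iio ((k - ρ * x) / Real.sqrt (1 - ρ ^ 2)), stdPdf t)) := by
        rw [integral_Iio_comp_affine stdPdf hs0]
    _ = stdPdf x * stdCdf ((k - ρ * x) / Real.sqrt (1 - ρ ^ 2)) := by
        rw [stdCdf]; field_simp


lemma sq_lt_one_of_mem {ρ : ℝ} (hρ : ρ ∈ Set.Ioo (-1:ℝ) 1) : ρ ^ 2 < 1 := by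
  nlinarith [hρ.1, hρ.2]

lemma eventually_Ioo : ∀ᶠ ρ in nhdsWithin (-1:ℝ) (Set.Ioi (-1)), ρ ∈ Set.Ioo (-1:ℝ) 1 := by
  filter_upwards [eventually_mem_nhdsWithin,
    (eventually_lt_nhds (show (-1:ℝ) < 1 by norm_num)).filter_mono nhdsWithin_le_nhds] with
    ρ h1 h2
  exact ⟨h1, h2⟩

lemma tendsto_sqrt_zero :
    Filter.Tendsto (fun ρ : ℝ => Real.sqrt (1 - ρ ^ 2)) (nhdsWithin (-1) (Set.Ioi (-1)))
      (nhdsWithin 0 (Set.Ioi 0)) := by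
  rw [tendsto_nhdsWithin_iff]
  constructor
  · have hc : Continuous (fun ρ : ℝ => Real.sqrt (1 - ρ ^ 2)) := by fun_prop
    have := (hc.tendsto (-1)).mono_left (nhdsWithin_le_nhds (s := Set.Ioi (-1)))
    simpa using this
  · filter_upwards [eventually_Ioo] with ρ hρ
    exact Real.sqrt_pos.mpr (by nlinarith [hρ.1, hρ.2])

lemma tendsto_arg_atTop {x k : ℝ} (hx : -k < x) :
    Filter.Tendsto (fun ρ : ℝ => (k - ρ * x) / Real.sqrt (1 - ρ ^ 2))
      (nhdsWithin (-1) (Set.Ioi (-1))) Filter.atTop := by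
  simp_rw [div_eq_mul_inv]
  apply Filter.Tendsto.pos_mul_atTop (C := k + x) (by linarith)
  · have hc : Continuous (fun ρ : ℝ => k - ρ * x) := by fun_prop
    have := (hc.tendsto (-1)).mono_left (nhdsWithin_le_nhds (s := Set.Ioi (-1)))
    simpa [sub_neg_eq_add] using this
  · exact tendsto_sqrt_zero.inv_tendsto_nhdsGT_zero

lemma tendsto_arg_atBot {x k : ℝ} (hx : x < -k) :
    Filter.Tendsto (fun ρ : ℝ => (k - ρ * x) / Real.sqrt (1 - ρ ^ 2))
      (nhdsWithin (-1) (Set.Ioi (-1))) Filter.atBot := by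
  simp_rw [div_eq_mul_inv]
  apply Filter.Tendsto.neg_mul_atTop (C := k + x) (by linarith)
  · have hc : Continuous (fun ρ : ℝ => k - ρ * x) := by fun_prop
    have := (hc.tendsto (-1)).mono_left (nhdsWithin_le_nhds (s := Set.Ioi (-1)))
    simpa [sub_neg_eq_add] using this
  · exact tendsto_sqrt_zero.inv_tendsto_nhdsGT_zero

lemma main_tendsto (h k : ℝ) :
    Filter.Tendsto (fun ρ : ℝ => binCdf h k ρ) (nhdsWithin (-1) (Set.Ioi (-1)))
      (nhds (∫ x in Set.Ioo (-k) h, stdPdf x)) := by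
  set l := nhdsWithin (-1:ℝ) (Set.Ioi (-1)) with hl
  have key : Filter.Tendsto
      (fun ρ : ℝ => ∫ x in Set.Iio h,
        stdPdf x * stdCdf ((k - ρ * x) / Real.sqrt (1 - ρ ^ 2))) l
      (nhds (∫ x in Set.Iio h, (Set.Ioi (-k)).indicator stdPdf x)) := by
    apply MeasureTheory.tendsto_integral_filter_of_dominated_convergence stdPdf
    · apply Filter.Eventually.of_forall
      intro ρ
      apply Continuous.aestronglyMeasurable
      have : Continuous fun x : ℝ => (k - ρ * x) / Real.sqrt (1 - ρ ^ 2) := by fun_prop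
      exact continuous_stdPdf.mul (continuous_stdCdf.comp this)
    · apply Filter.Eventually.of_forall
      intro ρ
      apply MeasureTheory.ae_of_all
      intro x
      have h1 := stdPdf_pos x
      have h2 := stdCdf_mem_Ioo ((k - ρ * x) / Real.sqrt (1 - ρ ^ 2))
      rw [Real.norm_eq_abs, abs_of_nonneg (by nlinarith [h2.1] : (0:ℝ) ≤ _)]
      nlinarith [h2.1, h2.2]
    · exact integrable_stdPdf.restrict
    · have hae : ∀ᵐ x : ℝ ∂(MeasureTheory.volume.restrict (Set.Iio h)), x ≠ -k := by
        apply MeasureTheory.ae_restrict_of_ae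
        have : (MeasureTheory.volume : MeasureTheory.Measure ℝ) {-k} = 0 :=
          MeasureTheory.measure_singleton _
        rw [MeasureTheory.ae_iff]
        convert this using 2
        ext x; simp
      filter_upwards [hae] with x hx
      rcases lt_or_gt_of_ne hx with hlt | hgt
      · -- x < -k : limit 0
        have := tendsto_stdCdf_atBot.comp (tendsto_arg_atBot hlt)
        have h2 : (Set.Ioi (-k)).indicator stdPdf x = 0 := by
          apply Set.indicator_of_notMem
          simp only [Set.mem_Ioi, not_lt]
          linarith
        rw [h2]
        simpa using (tendsto_const_nhds (x := stdPdf x)).mul this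
      · -- -k < x : limit stdPdf x
        have := tendsto_stdCdf_atTop.comp (tendsto_arg_atTop hgt)
        have h2 : (Set.Ioi (-k)).indicator stdPdf x = stdPdf x :=
          Set.indicator_of_mem (by simpa using hgt) _
        rw [h2]
        have := (tendsto_const_nhds (x := stdPdf x)).mul this
        simpa using this
  have heq : ∀ᶠ ρ in l, binCdf h k ρ
      = ∫ x in Set.Iio h, stdPdf x * stdCdf ((k - ρ * x) / Real.sqrt (1 - ρ ^ 2)) := by
    filter_upwards [eventually_Ioo] with ρ hρ
    unfold binCdf
    apply MeasureTheory.setIntegral_congr_fun measurableSet_Iio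
    intro x _
    exact inner_integral x k ρ (sq_lt_one_of_mem hρ)
  have hval : (∫ x in Set.Iio h, (Set.Ioi (-k)).indicator stdPdf x)
      = ∫ x in Set.Ioo (-k) h, stdPdf x := by
    rw [MeasureTheory.integral_indicator measurableSet_Ioi,
      MeasureTheory.Measure.restrict_restrict measurableSet_Ioi, Set.Ioi_inter_Iio]
  rw [← hval]
  exact key.congr' (heq.mono fun ρ hρ => hρ.symm)


end Aux

theorem tendsto_lower_frechet (u v : ℝ) (hu : u ∈ Set.Ioo (0 : ℝ) 1)
    (hv : v ∈ Set.Ioo (0 : ℝ) 1) :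
    Filter.Tendsto (fun ρ : ℝ => normCopula u v ρ) (nhdsWithin (-1) (Set.Ioi (-1)))
      (nhds (max (u + v - 1) 0)) := by
  set h := stdQuantile u with hh
  set k := stdQuantile v with hk
  have hcu : stdCdf h = u := stdCdf_stdQuantile hu
  have hcv : stdCdf k = v := stdCdf_stdQuantile hv
  have hcnk : stdCdf (-k) = 1 - v := by rw [stdCdf_neg, hcv]
  have hval : (∫ x in Set.Ioo (-k) h, stdPdf x) = max (u + v - 1) 0 := by
    rcases le_or_gt h (-k) with hle | hlt
    · rw [Set.Ioo_eq_empty (by simpa using hle)]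
      simp only [MeasureTheory.Measure.restrict_empty, MeasureTheory.integral_zero_measure]
      have : u + v - 1 ≤ 0 := by
        have := monotone_stdCdf hle
        rw [hcu, hcnk] at this
        linarith
      exact (max_eq_right this).symm
    · have hsub : stdCdf h - stdCdf (-k) = ∫ x in (-k)..h, stdPdf x := stdCdf_sub _ _
      rw [intervalIntegral.integral_of_le hlt.le,
        MeasureTheory.integral_Ioc_eq_integral_Ioo] at hsub
      rw [← hsub, hcu, hcnk]
      have : 0 ≤ u + v - 1 := by
        have := monotone_stdCdf hlt.le
        rw [hcu, hcnk] at this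
        linarith
      rw [max_eq_left this]
      ring
  rw [← hval]
  exact main_tendsto h k
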